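/- Let X be a path-connected topological space, x ∈ X, and n ≥ 1. The map that sends a based continuous map γ : (Sⁿ, s₀) → (P(X), x) to the same underlying function viewed as a based map (Sⁿ, s₀) → (X, x) induces a group isomorphism πₙ(P(X), x) ≅ πₙ(X, x). -/

import Mathlib

open TopologicalSpace Topology

/-- The Peano topology on `X`: generated by all path components of all open subsets. -/
def peanoTopology (X : Type*) [TopologicalSpace X] : TopologicalSpace X :=
  TopologicalSpace.generateFrom
    {C | ∃ (U : Set X) (x : X), IsOpen U ∧ x ∈ U ∧ C = pathComponentIn U x}

/-- The universal Peano space of `X`: the same underlying set with the Peano topology. -/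
def Peanify (X : Type*) [TopologicalSpace X] : Type _ := X

instance (X : Type*) [TopologicalSpace X] : TopologicalSpace (Peanify X) :=
  peanoTopology X

/-- The universal Peano map `P(X) → X` (the identity on underlying sets), as a
continuous map. -/
def ofPeanifyCM (X : Type*) [TopologicalSpace X] : C(Peanify X, X) where
  toFun := fun x => (x : X)
  continuous_toFun := by
    apply continuous_def.2
    intro U hU
    show TopologicalSpace.GenerateOpen _ U
    have hrw : U = ⋃₀ {C : Set X | ∃ x ∈ U, C = pathComponentIn U x} := by
      ext y
      constructor
      · intro hy
        exact ⟨pathComponentIn U y, ⟨y, hy, rfl⟩, mem_pathComponentIn_self hy⟩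
      · rintro ⟨C, ⟨x, hx, rfl⟩, hy⟩
        exact pathComponentIn_subset hy
    rw [hrw]
    apply TopologicalSpace.GenerateOpen.sUnion
    rintro C ⟨x, hx, rfl⟩
    exact TopologicalSpace.GenerateOpen.basic _ ⟨U, x, hU, hx, rfl⟩

/-- A generalized loop in `P(X)`, viewed (via the universal Peano map) as a generalized
loop in `X` with the same underlying function. -/
def GenLoop.peanify {X : Type*} [TopologicalSpace X] {N : Type*} {x : X}
    (γ : GenLoop N (Peanify X) x) : GenLoop N X x :=
  ⟨(ofPeanifyCM X).comp γ.1, fun y hy => γ.2 y hy⟩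

/-- Port helper: the `Group` instance of `HomotopyGroup` on `Peanify X` at a base point
`x : X` (this is just `HomotopyGroup.group`; needed because instance search no longer unfolds
`Peanify X` to `X` when matching the type of the base point). -/
noncomputable instance instGroupHomotopyGroupPeanify (X : Type*) [TopologicalSpace X] (x : X)
    (N : Type*) [DecidableEq N] [Nonempty N] : Group (HomotopyGroup N (Peanify X) x) :=
  HomotopyGroup.group N

/-!
A continuous map `f : Y → X` out of a locally path-connected space stays continuous for the
Peano topology: the preimage of a path component `C` of an open `U ∋ f y` contains the path
component of `y` in the open set `f ⁻¹' U`, which is a neighbourhood of `y`. The cubes `I^N`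
and the cylinders `I × I^N` are locally path-connected, so generalized loops in `X` and their
homotopies are exactly those in `P(X)`, while concatenation is given by the same formula in
both spaces.
-/

open unitInterval

instance : LocallyPathConnectedSpace I := (convex_Icc (0 : ℝ) 1).locallyPathConnectedSpace

instance : PathConnectedSpace I := .of_locallyPathConnectedSpace

theorem Continuous.peanoTopology {Y X : Type*} [TopologicalSpace Y] [LocallyPathConnectedSpace Y]
    [TopologicalSpace X] {f : Y → X} (hf : Continuous f) :
    Continuous[_, peanoTopology X] f := by
  rw [_root_.peanoTopology, continuous_generateFrom_iff]
  rintro _ ⟨U, x, hU, -, rfl⟩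
  rw [isOpen_iff_mem_nhds]
  intro y hy
  have hyU : f y ∈ U := pathComponentIn_subset hy
  refine Filter.mem_of_superset (((hU.preimage hf).pathComponentIn y).mem_nhds
    (mem_pathComponentIn_self hyU)) fun z ⟨γ, hγ⟩ => ?_
  have hfz : f z ∈ pathComponentIn U (f y) := ⟨γ.map hf, hγ⟩
  rwa [pathComponentIn_congr hy] at hfz

namespace GenLoop

variable {X : Type*} [TopologicalSpace X] {N : Type*} {x : X}

def unpeanify (γ : GenLoop N X x) : GenLoop N (Peanify X) x :=
  ⟨⟨γ, γ.1.continuous.peanoTopology⟩, γ.2⟩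

def peanifyEquiv : GenLoop N (Peanify X) x ≃ GenLoop N X x where
  toFun := peanify
  invFun := unpeanify
  left_inv _ := rfl
  right_inv _ := rfl

theorem homotopic_peanify_iff {γ δ : GenLoop N (Peanify X) x} :
    Homotopic (peanify γ) (peanify δ) ↔ Homotopic γ δ := by
  constructor
  · rintro ⟨H⟩
    exact ⟨{ H with continuous_toFun := H.continuous.peanoTopology }⟩
  · rintro ⟨H⟩
    exact ⟨{ H with continuous_toFun := (ofPeanifyCM X).continuous.comp H.continuous }⟩

theorem peanify_transAt [DecidableEq N] (i : N) (f g : GenLoop N (Peanify X) x) :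
    peanify (transAt i f g) = transAt i (peanify f) (peanify g) :=
  rfl

end GenLoop

noncomputable def HomotopyGroup.peanifyMulEquiv (X : Type*) [TopologicalSpace X] (x : X)
    (N : Type*) [DecidableEq N] [Nonempty N] :
    HomotopyGroup N (Peanify X) x ≃* HomotopyGroup N X x where
  toEquiv := Quotient.congr GenLoop.peanifyEquiv fun _ _ => GenLoop.homotopic_peanify_iff.symm
  map_mul' := by
    rintro ⟨p⟩ ⟨q⟩
    let i : N := Classical.arbitrary N
    exact (congrArg _ (HomotopyGroup.mul_spec (i := i))).trans <|
      (congrArg (Quotient.mk _) (GenLoop.peanify_transAt i q p)).trans HomotopyGroup.mul_spec.symm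

theorem homotopyGroup_peanify_iso_general (X : Type*) [TopologicalSpace X]
    (x : X) (n : ℕ) :
    ∃ e : HomotopyGroup (Fin (n + 1)) (Peanify X) x ≃* HomotopyGroup (Fin (n + 1)) X x,
      ∀ γ : GenLoop (Fin (n + 1)) (Peanify X) x, e ⟦γ⟧ = ⟦GenLoop.peanify γ⟧ :=
  ⟨HomotopyGroup.peanifyMulEquiv X x _, fun _ => rfl⟩

/-- for a path-connected space `X`, `x ∈ X` and `n ≥ 1`, the map sending a
based map `Sⁿ → P(X)` (here: a generalized loop) to the same underlying function viewed as
a based map into `X` induces a group isomorphism `πₙ(P(X), x) ≅ πₙ(X, x)`. -/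
theorem homotopyGroup_peanify_iso (X : Type*) [TopologicalSpace X] [PathConnectedSpace X]
    (x : X) (n : ℕ) :
    ∃ e : HomotopyGroup (Fin (n + 1)) (Peanify X) x ≃* HomotopyGroup (Fin (n + 1)) X x,
      ∀ γ : GenLoop (Fin (n + 1)) (Peanify X) x, e ⟦γ⟧ = ⟦GenLoop.peanify γ⟧ :=
  homotopyGroup_peanify_iso_general X x n
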